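/- arXiv:2201.03610 — 3 statements merged into one kernel-verified Lean document; each statement's English description precedes it below -/
import Mathlib

section
/- Let d ≥ 3, let ψ : ℝ^d → ℂ^N be continuously differentiable, let ε > 0, and set φ := ψ/|ψ|_ε^{d/(d-1)}. Then at every point of ℝ^d: |∇φ|² |ψ|_ε² = |∇ψ|² / |ψ|_ε^{2/(d-1)} + |∇(|ψ|_ε^{(d-2)/(d-1)})|² · [ (d/(d-2))² |ψ|²/|ψ|_ε² − 2d(d-1)/(d-2)² ], where |∇f|² := Σ_{j=1}^d |∂_j f|². -/
/-!
Write `r = |ψ|_ε`, `α = d/(d-1)` and `β = (d-2)/(d-1)`. Differentiating `r² = |ψ|² + ε²` gives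
`r ∂ⱼr = Re⟨ψ, ∂ⱼψ⟩`, so `∂ⱼφ = r^{-α} (∂ⱼψ - (α ∂ⱼr / r) ψ)` and expanding the square yields
`|∇φ|² = r^{-2α} (|∇ψ|² + (α²|ψ|²/r² - 2α) |∇r|²)`. By the chain rule
`|∇(r^β)|² = β² r^{2β-2} |∇r|²`; since `β d/(d-2) = α` and `2 - 2α = 2β - 2 = -2/(d-1)`,
the two sides agree.
-/

open MeasureTheory Complex Filter ENNReal

noncomputable section

/-- `ℝ^d` with the Euclidean norm. -/
abbrev ESp (d : ℕ) := EuclideanSpace ℝ (Fin d)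

/-- Spinor space `ℂ^N` with the Hermitian norm. -/
abbrev Spinor (N : ℕ) := EuclideanSpace ℂ (Fin N)

/-- Partial derivative in the `j`-th coordinate direction. -/
def pd {d : ℕ} {V : Type*} [NormedAddCommGroup V] [NormedSpace ℝ V]
    (j : Fin d) (f : ESp d → V) (x : ESp d) : V :=
  fderiv ℝ f x (EuclideanSpace.single j 1)

/-- `|∇f|² = ∑ⱼ |∂ⱼ f|²` for a vector-valued function `f`. -/
def gradSq {d : ℕ} {V : Type*} [NormedAddCommGroup V] [NormedSpace ℝ V]
    (f : ESp d → V) (x : ESp d) : ℝ :=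
  ∑ j, ‖pd j f x‖ ^ 2

/-- The regularized modulus `|ψ|_ε = √(|ψ|² + ε²)`. -/
def regMod {d N : ℕ} (ψ : ESp d → Spinor N) (ε : ℝ) (x : ESp d) : ℝ :=
  Real.sqrt (‖ψ x‖ ^ 2 + ε ^ 2)

section PartialDerivatives

variable {d : ℕ} {V : Type*} [NormedAddCommGroup V] [NormedSpace ℝ V] {x : ESp d}

theorem pd_comp_of_hasDerivAt {g : ESp d → ℝ} {h : ℝ → ℝ} {h' : ℝ}
    (hh : HasDerivAt h h' (g x)) (hg : DifferentiableAt ℝ g x) (j : Fin d) :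
    pd j (fun y => h (g y)) x = h' * pd j g x := by
  rw [pd, pd, show (fun y => h (g y)) = h ∘ g from rfl,
    (hh.comp_hasFDerivAt x hg.hasFDerivAt).fderiv]
  simp

theorem gradSq_comp_of_hasDerivAt {g : ESp d → ℝ} {h : ℝ → ℝ} {h' : ℝ}
    (hh : HasDerivAt h h' (g x)) (hg : DifferentiableAt ℝ g x) :
    gradSq (fun y => h (g y)) x = h' ^ 2 * gradSq g x := by
  simp only [gradSq, pd_comp_of_hasDerivAt hh hg, norm_mul, mul_pow, Real.norm_eq_abs, sq_abs,
    Finset.mul_sum]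

theorem pd_smul {c : ESp d → ℝ} {f : ESp d → V} (hc : DifferentiableAt ℝ c x)
    (hf : DifferentiableAt ℝ f x) (j : Fin d) :
    pd j (fun y => c y • f y) x = c x • pd j f x + pd j c x • f x := by
  rw [pd, fderiv_fun_smul hc hf]
  simp [pd]

end PartialDerivatives

section InnerProduct

open scoped RealInnerProductSpace

variable {d : ℕ} {V : Type*} [NormedAddCommGroup V] [InnerProductSpace ℝ V] {x : ESp d}

theorem mul_pd_eq_inner_of_sq_eq {f : ESp d → V} {R : ESp d → ℝ} {c : ℝ}
    (hR : ∀ y, R y ^ 2 = ‖f y‖ ^ 2 + c) (hRd : DifferentiableAt ℝ R x)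
    (hf : DifferentiableAt ℝ f x) (j : Fin d) :
    R x * pd j R x = ⟪f x, pd j f x⟫ := by
  have hsq : pd j (fun y => R y ^ 2) x = 2 * R x * pd j R x := by
    rw [pd_comp_of_hasDerivAt (hasDerivAt_pow 2 (R x)) hRd]
    ring
  have hnorm : pd j (fun y => ‖f y‖ ^ 2 + c) x = 2 * ⟪f x, pd j f x⟫ := by
    rw [pd, (hf.hasFDerivAt.norm_sq.add_const c).fderiv]
    simp [pd]
  rw [funext hR, hnorm] at hsq
  linarith

theorem norm_sub_smul_sq_of_inner_eq {u p : V} {r a : ℝ} (α : ℝ) (hr : r ≠ 0)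
    (h : ⟪u, p⟫ = r * a) :
    ‖p - (α * a / r) • u‖ ^ 2 = ‖p‖ ^ 2 + (α ^ 2 * ‖u‖ ^ 2 / r ^ 2 - 2 * α) * a ^ 2 := by
  rw [norm_sub_sq_real, real_inner_smul_right, real_inner_comm, h, norm_smul, mul_pow,
    Real.norm_eq_abs, sq_abs]
  field_simp
  ring

theorem hasDerivAt_one_div_rpow {t : ℝ} (ht : 0 < t) (α : ℝ) :
    HasDerivAt (fun s : ℝ => 1 / s ^ α) (-(α * (1 / t ^ α) / t)) t := by
  refine ((hasDerivAt_const t 1).div (Real.hasDerivAt_rpow_const (Or.inl ht.ne'))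
    (Real.rpow_pos_of_pos ht α).ne').congr_deriv ?_
  rw [Real.rpow_sub_one ht.ne']
  field_simp
  ring

theorem gradSq_one_div_rpow_smul {f : ESp d → V} {R : ESp d → ℝ} {c : ℝ}
    (hR : ∀ y, R y ^ 2 = ‖f y‖ ^ 2 + c) (hRx : 0 < R x) (hRd : DifferentiableAt ℝ R x)
    (hf : DifferentiableAt ℝ f x) (α : ℝ) :
    gradSq (fun y => (1 / R y ^ α) • f y) x
      = (1 / R x ^ α) ^ 2 * (gradSq f x + (α ^ 2 * ‖f x‖ ^ 2 / R x ^ 2 - 2 * α) * gradSq R x) := by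
  have hw := hasDerivAt_one_div_rpow hRx α
  have hpd : ∀ j, pd j (fun y => (1 / R y ^ α) • f y) x
      = (1 / R x ^ α) • (pd j f x - (α * pd j R x / R x) • f x) := by
    intro j
    rw [pd_smul (c := fun y => 1 / R y ^ α) (hw.differentiableAt.comp x hRd) hf,
      pd_comp_of_hasDerivAt hw hRd, smul_sub, smul_smul, sub_eq_add_neg, ← neg_smul]
    congr 2
    ring
  simp only [gradSq, hpd, norm_smul, mul_pow, Real.norm_eq_abs, sq_abs,
    norm_sub_smul_sq_of_inner_eq α hRx.ne' (mul_pd_eq_inner_of_sq_eq hR hRd hf _).symm,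
    ← Finset.mul_sum, Finset.sum_add_distrib]

end InnerProduct

section RegularizedModulus

variable {d N : ℕ}

theorem regMod_sq (ψ : ESp d → Spinor N) (ε : ℝ) (y : ESp d) :
    regMod ψ ε y ^ 2 = ‖ψ y‖ ^ 2 + ε ^ 2 :=
  Real.sq_sqrt (by positivity)

theorem regMod_pos (ψ : ESp d → Spinor N) {ε : ℝ} (hε : ε ≠ 0) (x : ESp d) :
    0 < regMod ψ ε x :=
  Real.sqrt_pos.2 (by positivity)

theorem differentiableAt_regMod {ψ : ESp d → Spinor N} {ε : ℝ} {x : ESp d}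
    (hψ : DifferentiableAt ℝ ψ x) (hε : ε ≠ 0) :
    DifferentiableAt ℝ (regMod ψ ε) x :=
  ((hψ.norm_sq ℝ).add_const _).sqrt (by positivity)

end RegularizedModulus

theorem gradient_term_pointwise_identity_general
    (d : ℕ) (hd : 3 ≤ d) (N : ℕ)
    (ψ : ESp d → Spinor N) (hψ : ContDiff ℝ 1 ψ) (ε : ℝ) (hε : 0 < ε)
    (φ : ESp d → Spinor N)
    (hφ : φ = fun x => (1 / regMod ψ ε x ^ ((d : ℝ) / ((d : ℝ) - 1))) • ψ x) :
    ∀ x : ESp d,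
      gradSq φ x * regMod ψ ε x ^ 2
        = gradSq ψ x / regMod ψ ε x ^ ((2 : ℝ) / ((d : ℝ) - 1))
          + gradSq (fun y => regMod ψ ε y ^ (((d : ℝ) - 2) / ((d : ℝ) - 1))) x
            * ( ((d : ℝ) / ((d : ℝ) - 2)) ^ 2 * ‖ψ x‖ ^ 2 / regMod ψ ε x ^ 2
                - 2 * (d : ℝ) * ((d : ℝ) - 1) / ((d : ℝ) - 2) ^ 2 ) := by
  intro x
  have hψx : DifferentiableAt ℝ ψ x := hψ.differentiable one_ne_zero x
  have hr := regMod_pos ψ hε.ne' x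
  have hrd := differentiableAt_regMod hψx hε.ne'
  rw [hφ, gradSq_one_div_rpow_smul (regMod_sq ψ ε) hr hrd hψx,
    gradSq_comp_of_hasDerivAt (Real.hasDerivAt_rpow_const (Or.inl hr.ne')) hrd]
  have hd' : (3 : ℝ) ≤ d := by exact_mod_cast hd
  have he1 : (d : ℝ) - 1 ≠ 0 := by linarith
  have he2 : (d : ℝ) - 2 ≠ 0 := by linarith
  set r := regMod ψ ε x
  -- every exponent left is a multiple of `1/(d-1)`
  set s := r ^ (1 / ((d : ℝ) - 1))
  have hs : 0 < s := Real.rpow_pos_of_pos hr _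
  have hα : r ^ ((d : ℝ) / ((d : ℝ) - 1)) = r * s := by
    rw [show (d : ℝ) / (d - 1) = 1 + 1 / (d - 1) by field_simp; ring, Real.rpow_add hr,
      Real.rpow_one]
  have h2 : r ^ ((2 : ℝ) / ((d : ℝ) - 1)) = s ^ 2 := by
    rw [← Real.rpow_mul_natCast hr.le]
    congr 1
    push_cast
    field_simp
  have hβ : r ^ (((d : ℝ) - 2) / ((d : ℝ) - 1) - 1) = s⁻¹ := by
    rw [← Real.rpow_neg hr.le]
    congr 1
    field_simp
    ring
  rw [hα, h2, hβ]
  field_simp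

/-- The pointwise identity for `|∇φ|²|ψ|_ε²` with
`φ = ψ/|ψ|_ε^{d/(d-1)}`, for a `C¹` spinor field `ψ`. -/
theorem gradient_term_pointwise_identity
    (d : ℕ) (hd : 3 ≤ d) (N : ℕ) (hN : N = 2 ^ (d / 2))
    (ψ : ESp d → Spinor N) (hψ : ContDiff ℝ 1 ψ) (ε : ℝ) (hε : 0 < ε)
    (φ : ESp d → Spinor N)
    (hφ : φ = fun x => (1 / regMod ψ ε x ^ ((d : ℝ) / ((d : ℝ) - 1))) • ψ x) :
    ∀ x : ESp d,
      gradSq φ x * regMod ψ ε x ^ 2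
        = gradSq ψ x / regMod ψ ε x ^ ((2 : ℝ) / ((d : ℝ) - 1))
          + gradSq (fun y => regMod ψ ε y ^ (((d : ℝ) - 2) / ((d : ℝ) - 1))) x
            * ( ((d : ℝ) / ((d : ℝ) - 2)) ^ 2 * ‖ψ x‖ ^ 2 / regMod ψ ε x ^ 2
                - 2 * (d : ℝ) * ((d : ℝ) - 1) / ((d : ℝ) - 2) ^ 2 ) :=
  gradient_term_pointwise_identity_general d hd N ψ hψ ε hε φ hφ
end
end

section
/- Let d ≥ 3 and let Φ : ℝ^d → ℂ^N be twice continuously differentiable and satisfy the twistor equation [−i∂_j − (1/d) γ_j γ·(-i∇)] Φ = 0 on ℝ^d for every j = 1,…,d. Then there exist constant spinors φ_0, φ_1 ∈ ℂ^N such that Φ(x) = φ_0 + (γ·x) φ_1 for all x ∈ ℝ^d. -/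
open MeasureTheory Complex Filter ENNReal

noncomputable section

/-- Action of an `N × N` complex matrix on a spinor. -/
def mulVecE {N : ℕ} (M : Matrix (Fin N) (Fin N) ℂ) (v : Spinor N) : Spinor N :=
  Matrix.toEuclideanLin M v

/-- The Dirac operator `γ·(-i∇)ψ = ∑ⱼ γⱼ (-i ∂ⱼ ψ)`. -/
def dirac {d N : ℕ} (γ : Fin d → Matrix (Fin N) (Fin N) ℂ)
    (ψ : ESp d → Spinor N) (x : ESp d) : Spinor N :=
  ∑ j, mulVecE (γ j) ((-Complex.I) • pd j ψ x)

/-- `γ·a = ∑ⱼ aⱼ γⱼ` for a real vector `a`. -/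
def gdotR {d N : ℕ} (γ : Fin d → Matrix (Fin N) (Fin N) ℂ) (v : ESp d) :
    Matrix (Fin N) (Fin N) ℂ :=
  ∑ j, (v j : ℂ) • γ j

/-!
With `ψ := γ·(-i∇)Φ`, the twistor equation reads `∂ⱼΦ = (i/d) γⱼ ψ`. Differentiating `ψ` and
using the symmetry of second derivatives gives `d ∂ₖψ = ∑ⱼ γⱼ γₖ ∂ⱼψ`. The Clifford relations turn
this into `d ∂ₖψ = 2 ∂ₖψ - γₖ S` with `S = ∑ⱼ γⱼ ∂ⱼψ`, and contracting with `γₖ` gives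
`(2d - 2) S = 0`. So for `d ≥ 3` every `∂ₖψ` vanishes, `ψ` is constant, all `∂ⱼΦ` are constant,
and `Φ` is affine of the stated form.
-/

open Finset

def IsCliffordFamily {ι R : Type*} [DecidableEq ι] [Ring R] (γ : ι → R) : Prop :=
  ∀ j k, γ j * γ k + γ k * γ j = if j = k then 2 else 0

namespace IsCliffordFamily

variable {ι R M : Type*} [DecidableEq ι] [Ring R] [AddCommGroup M] [Module R M] {γ : ι → R}

lemma map {S : Type*} [Ring S] (hγ : IsCliffordFamily γ) (f : R →+* S) :
    IsCliffordFamily (fun j => f (γ j)) := fun j k => by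
  simpa [apply_ite f, map_ofNat] using congrArg f (hγ j k)

lemma smul_smul_self [IsAddTorsionFree M] (hγ : IsCliffordFamily γ) (k : ι) (v : M) :
    γ k • γ k • v = v := by
  apply nsmul_right_injective two_ne_zero
  dsimp only
  rw [two_nsmul, two_nsmul, smul_smul, ← add_smul, hγ k k, if_pos rfl, two_smul]

lemma sum_smul_smul [Fintype ι] (hγ : IsCliffordFamily γ) (u : ι → M) (k : ι) :
    ∑ j, γ j • γ k • u j = 2 • u k - γ k • ∑ j, γ j • u j := by
  have hjk : ∀ j, γ j • γ k • u j = (if j = k then 2 • u j else 0) - γ k • γ j • u j := by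
    intro j
    rw [smul_smul, smul_smul, eq_sub_iff_add_eq, ← add_smul, hγ j k]
    split_ifs <;> simp [two_smul]
  simp only [hjk, sum_sub_distrib, sum_ite_eq', mem_univ, if_true, smul_sum]

lemma eq_zero_of_card_nsmul_eq_sum [Fintype ι] [IsAddTorsionFree M] (hγ : IsCliffordFamily γ)
    (h1 : Fintype.card ι ≠ 1) (h2 : Fintype.card ι ≠ 2) {u : ι → M}
    (hu : ∀ k, Fintype.card ι • u k = ∑ j, γ j • γ k • u j) : u = 0 := by
  set d := Fintype.card ι
  set S := ∑ j, γ j • u j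
  have hu' : ∀ k, d • u k = 2 • u k - γ k • S := fun k => (hu k).trans (hγ.sum_smul_smul u k)
  have hS : d • S = 2 • S - d • S :=
    calc d • S = ∑ k, γ k • d • u k := by simp only [S, smul_sum, smul_comm _ d]
      _ = ∑ k, (2 • γ k • u k - S) := by
        simp only [hu', smul_sub, hγ.smul_smul_self, smul_comm (γ _) (2 : ℕ)]
      _ = 2 • S - d • S := by simp [S, sum_sub_distrib, smul_sum, d]
  have hS0 : S = 0 := by
    have : ((2 * d : ℤ) - 2) • S = 0 := by
      linear_combination (norm := module) hS
    exact (smul_eq_zero.mp this).resolve_left (by omega)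
  funext k
  have : ((d : ℤ) - 2) • u k = 0 := by
    have hk := hu' k
    rw [hS0, smul_zero, sub_zero] at hk
    linear_combination (norm := module) hk
  exact (smul_eq_zero.mp this).resolve_left (by omega)

end IsCliffordFamily

section PartialDerivatives

variable {d : ℕ} {V W : Type*} [NormedAddCommGroup V] [NormedSpace ℝ V]
  [NormedAddCommGroup W] [NormedSpace ℝ W]

lemma fderiv_apply_eq_sum_pd (f : ESp d → V) (x y : ESp d) :
    fderiv ℝ f y x = ∑ j, x j • pd j f y := by
  conv_lhs => rw [← (EuclideanSpace.basisFun (Fin d) ℝ).sum_repr x]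
  simp [pd]

lemma pd_clm_comp (A : V →L[ℝ] W) {f : ESp d → V} {x : ESp d} (hf : DifferentiableAt ℝ f x)
    (j : Fin d) : pd j (fun y => A (f y)) x = A (pd j f x) := by
  change fderiv ℝ (A ∘ f) x _ = _
  rw [(A.hasFDerivAt.comp x hf.hasFDerivAt).fderiv]
  rfl

lemma pd_sum {ι : Type*} (s : Finset ι) {f : ι → ESp d → V} {x : ESp d}
    (hf : ∀ i ∈ s, DifferentiableAt ℝ (f i) x) (j : Fin d) :
    pd j (fun y => ∑ i ∈ s, f i y) x = ∑ i ∈ s, pd j (f i) x := by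
  simp [pd, fderiv_fun_sum hf]

lemma ContDiff.differentiable_pd {f : ESp d → V} (hf : ContDiff ℝ 2 f) (j : Fin d) :
    Differentiable ℝ (pd j f) :=
  ((hf.fderiv_right (m := 1) le_rfl).differentiable one_ne_zero).clm_apply
    (differentiable_const _)

lemma ContDiff.pd_pd_comm {f : ESp d → V} (hf : ContDiff ℝ 2 f) (j k : Fin d) (x : ESp d) :
    pd j (pd k f) x = pd k (pd j f) x := by
  have hf' : Differentiable ℝ (fderiv ℝ f) :=
    (hf.fderiv_right (m := 1) le_rfl).differentiable one_ne_zero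
  have hpd : ∀ a b, pd a (pd b f) x =
      fderiv ℝ (fderiv ℝ f) x (EuclideanSpace.single a 1) (EuclideanSpace.single b 1) := fun a b =>
    pd_clm_comp (ContinuousLinearMap.apply ℝ V (EuclideanSpace.single b 1)) (hf' x) a
  rw [hpd, hpd]
  exact hf.contDiffAt.isSymmSndFDerivAt (by simp) _ _

lemma eq_add_sum_smul_of_pd_eq {f : ESp d → V} (hf : Differentiable ℝ f) {v : Fin d → V}
    (h : ∀ j x, pd j f x = v j) (x : ESp d) : f x = f 0 + ∑ j, x j • v j := by
  set L := fderiv ℝ f 0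
  have hL : ∀ y, fderiv ℝ f y = L := fun y => by
    ext z
    simp only [L, fderiv_apply_eq_sum_pd, h]
  have hconst : f x - L x = f 0 - L 0 :=
    is_const_of_fderiv_eq_zero (hf.sub L.differentiable)
      (fun y => by rw [fderiv_sub (hf y) L.differentiableAt, hL, L.fderiv, sub_self]) x 0
  rw [map_zero, sub_zero, sub_eq_iff_eq_add] at hconst
  simpa only [L, fderiv_apply_eq_sum_pd, h] using hconst

end PartialDerivatives

instance (N : ℕ) : IsAddTorsionFree (Spinor N) := .of_isTorsionFree ℂ _

section Dirac

variable {d N : ℕ} (γ : Fin d → Matrix (Fin N) (Fin N) ℂ)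

lemma mulVecE_eq_toEuclideanCLM (M : Matrix (Fin N) (Fin N) ℂ) (v : Spinor N) :
    mulVecE M v = Matrix.toEuclideanCLM (𝕜 := ℂ) M v := rfl

lemma mulVecE_gdotR (x : ESp d) (v : Spinor N) :
    mulVecE (gdotR γ x) v = ∑ j, x j • mulVecE (γ j) v := by
  simp only [mulVecE_eq_toEuclideanCLM, gdotR, map_sum, map_smul, _root_.sum_apply, smul_apply]
  simp only [Complex.coe_smul]

lemma pd_mulVecE (M : Matrix (Fin N) (Fin N) ℂ) {f : ESp d → Spinor N} {x : ESp d}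
    (hf : DifferentiableAt ℝ f x) (j : Fin d) :
    pd j (fun y => mulVecE M (f y)) x = mulVecE M (pd j f x) :=
  pd_clm_comp ((Matrix.toEuclideanCLM (𝕜 := ℂ) M).restrictScalars ℝ) hf j

lemma Differentiable.mulVecE (M : Matrix (Fin N) (Fin N) ℂ) {f : ESp d → Spinor N}
    (hf : Differentiable ℝ f) : Differentiable ℝ (fun y => mulVecE M (f y)) :=
  ((Matrix.toEuclideanCLM (𝕜 := ℂ) M).restrictScalars ℝ).differentiable.comp hf

lemma dirac_eq_sum (ψ : ESp d → Spinor N) :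
    dirac γ ψ = fun x => ∑ j, mulVecE ((-I) • γ j) (pd j ψ x) := by
  funext x
  simp [dirac, mulVecE_eq_toEuclideanCLM]

lemma ContDiff.differentiable_dirac {ψ : ESp d → Spinor N} (hψ : ContDiff ℝ 2 ψ) :
    Differentiable ℝ (dirac γ ψ) := by
  rw [dirac_eq_sum]
  exact Differentiable.fun_sum fun j _ => (hψ.differentiable_pd j).mulVecE _

lemma ContDiff.pd_dirac {ψ : ESp d → Spinor N} (hψ : ContDiff ℝ 2 ψ) (k : Fin d) (x : ESp d) :
    pd k (dirac γ ψ) x = dirac γ (pd k ψ) x := by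
  rw [dirac_eq_sum, dirac_eq_sum,
    pd_sum _ fun j _ => ((hψ.differentiable_pd j).mulVecE _) x]
  simp only [pd_mulVecE _ (hψ.differentiable_pd _ x), hψ.pd_pd_comm]

end Dirac

section Twistor

def IsTwistorSpinor {d N : ℕ} (γ : Fin d → Matrix (Fin N) (Fin N) ℂ) (Φ : ESp d → Spinor N) :
    Prop :=
  ∀ j x, (-I) • pd j Φ x - (d : ℂ)⁻¹ • mulVecE (γ j) (dirac γ Φ x) = 0

variable {d N : ℕ} {γ : Fin d → Matrix (Fin N) (Fin N) ℂ} {Φ : ESp d → Spinor N}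

lemma IsTwistorSpinor.pd_eq (htw : IsTwistorSpinor γ Φ) (j : Fin d) (x : ESp d) :
    pd j Φ x = mulVecE ((I * (d : ℂ)⁻¹) • γ j) (dirac γ Φ x) := by
  have h := congrArg (I • ·) (sub_eq_zero.mp (htw j x))
  simpa [smul_smul, mulVecE_eq_toEuclideanCLM, ← mul_assoc] using h

lemma IsTwistorSpinor.pd_dirac_eq (htw : IsTwistorSpinor γ Φ) (hΦ : ContDiff ℝ 2 Φ)
    (k : Fin d) (x : ESp d) :
    pd k (dirac γ Φ) x = (d : ℂ)⁻¹ • ∑ j, Matrix.toEuclideanCLM (𝕜 := ℂ) (γ j) •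
      Matrix.toEuclideanCLM (𝕜 := ℂ) (γ k) • pd j (dirac γ Φ) x := by
  rw [hΦ.pd_dirac, dirac, smul_sum, funext (htw.pd_eq k)]
  refine sum_congr rfl fun j _ => ?_
  rw [pd_mulVecE _ ((hΦ.differentiable_dirac γ) x)]
  simp [mulVecE_eq_toEuclideanCLM, smul_smul, ← mul_assoc, ContinuousLinearMap.smul_def]

lemma IsTwistorSpinor.dirac_eq_const (htw : IsTwistorSpinor γ Φ) (hΦ : ContDiff ℝ 2 Φ)
    (hγ : IsCliffordFamily γ) (hd1 : d ≠ 1) (hd2 : d ≠ 2) (x : ESp d) :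
    dirac γ Φ x = dirac γ Φ 0 := by
  have hpd : ∀ y, (fun k => pd k (dirac γ Φ) y) = 0 := fun y =>
    (hγ.map Matrix.toEuclideanCLM.toRingHom).eq_zero_of_card_nsmul_eq_sum (by simpa) (by simpa)
      fun k => by
        have hd0 : (d : ℂ) ≠ 0 := Nat.cast_ne_zero.mpr k.pos.ne'
        rw [Fintype.card_fin, ← Nat.cast_smul_eq_nsmul ℂ, htw.pd_dirac_eq hΦ, smul_inv_smul₀ hd0]
        rfl
  simpa using eq_add_sum_smul_of_pd_eq (hΦ.differentiable_dirac γ) (fun k y => congrFun (hpd y) k) x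

end Twistor

theorem twistor_spinor_classification_general
    (d : ℕ) (hd : 3 ≤ d) (N : ℕ)
    (γ : Fin d → Matrix (Fin N) (Fin N) ℂ)
    (hanti : ∀ j k, γ j * γ k + γ k * γ j = if j = k then (2 : ℂ) • 1 else 0)
    (Φ : ESp d → Spinor N) (hΦ : ContDiff ℝ 2 Φ)
    (htw : ∀ (j : Fin d) (x : ESp d),
      (-Complex.I) • pd j Φ x - (((d : ℂ))⁻¹) • mulVecE (γ j) (dirac γ Φ x) = 0) :
    ∃ φ₀ φ₁ : Spinor N, ∀ x : ESp d, Φ x = φ₀ + mulVecE (gdotR γ x) φ₁ := by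
  have hγ : IsCliffordFamily γ := fun j k => by
    simpa [two_smul, one_add_one_eq_two] using hanti j k
  refine ⟨Φ 0, (I * (d : ℂ)⁻¹) • dirac γ Φ 0, fun x => ?_⟩
  have hpd : ∀ j y, pd j Φ y = mulVecE ((I * (d : ℂ)⁻¹) • γ j) (dirac γ Φ 0) := fun j y => by
    rw [IsTwistorSpinor.pd_eq htw, IsTwistorSpinor.dirac_eq_const htw hΦ hγ (by omega) (by omega)]
  rw [eq_add_sum_smul_of_pd_eq (hΦ.differentiable two_ne_zero) hpd x, mulVecE_gdotR]
  simp [mulVecE_eq_toEuclideanCLM]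

/-- Any `C²` twistor spinor on `ℝ^d` is of the form
`Φ(x) = φ₀ + (γ·x)φ₁` for constant spinors `φ₀, φ₁`. -/
theorem twistor_spinor_classification
    (d : ℕ) (hd : 3 ≤ d) (N : ℕ) (hN : N = 2 ^ (d / 2))
    (γ : Fin d → Matrix (Fin N) (Fin N) ℂ)
    (hherm : ∀ j, (γ j).IsHermitian)
    (hanti : ∀ j k, γ j * γ k + γ k * γ j = if j = k then (2 : ℂ) • 1 else 0)
    (Φ : ESp d → Spinor N) (hΦ : ContDiff ℝ 2 Φ)
    (htw : ∀ (j : Fin d) (x : ESp d),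
      (-Complex.I) • pd j Φ x - (((d : ℂ))⁻¹) • mulVecE (γ j) (dirac γ Φ x) = 0) :
    ∃ φ₀ φ₁ : Spinor N, ∀ x : ESp d, Φ x = φ₀ + mulVecE (gdotR γ x) φ₁ :=
  twistor_spinor_classification_general d hd N γ hanti Φ hΦ htw
end
end

section
/- Let d ≥ 3, let w ∈ ℝ^d with |w| = 1, let M be a real d×d matrix with Mw = 0, and let φ_0, φ_1 ∈ ℂ^N satisfy i(γ·x)φ_0 = (γ·w)(γ·x)φ_1 + 2(γ·(Mx))φ_0 for all x ∈ ℝ^d. Then: (i) −i φ_1 = (γ·w) φ_0, and (ii) (γ·(My)) φ_0 = i (γ·y) φ_0 for every y ∈ ℝ^d with w·y = 0. -/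
open MeasureTheory Complex Filter ENNReal

noncomputable section

/-- `γ·a = ∑ⱼ aⱼ γⱼ` for a real vector `a` (given as a plain function). -/
def gdotF {d N : ℕ} (γ : Fin d → Matrix (Fin N) (Fin N) ℂ) (v : Fin d → ℝ) :
    Matrix (Fin N) (Fin N) ℂ :=
  ∑ j, (v j : ℂ) • γ j

/-!
The Clifford relations give `(γ·a)(γ·b) + (γ·b)(γ·a) = 2 (a·b) I`, so `(γ·w)² = I` and `γ·w`
anticommutes with `γ·y` for `y ⊥ w`. Taking `x = w` (where `Mw = 0`) gives `φ₁ = i(γ·w)φ₀`;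
substituting this back for `y ⊥ w`, the term `(γ·w)(γ·y)φ₁` becomes `-i(γ·y)φ₀`, which leaves
`2i(γ·y)φ₀ = 2(γ·(My))φ₀`.
-/

theorem sum_smul_mul_add_sum_smul_mul_of_anticomm {R A ι : Type*} [CommRing R] [Ring A]
    [Algebra R A] [Fintype ι] [DecidableEq ι] {e : ι → A}
    (he : ∀ j k, e j * e k + e k * e j = if j = k then (2 : R) • 1 else 0) (a b : ι → R) :
    (∑ j, a j • e j) * (∑ k, b k • e k) + (∑ k, b k • e k) * (∑ j, a j • e j)
      = (2 * ∑ j, a j * b j) • 1 := by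
  simp_rw [Finset.sum_mul_sum, smul_mul_smul_comm]
  rw [Finset.sum_comm (s := Finset.univ) (t := Finset.univ)
    (f := fun k j => (b k * a j) • (e k * e j)), ← Finset.sum_add_distrib]
  simp_rw [← Finset.sum_add_distrib, mul_comm (b _) (a _), ← smul_add, he, smul_ite, smul_zero,
    Finset.sum_ite_eq, Finset.mem_univ, if_true, smul_smul, ← Finset.sum_smul, Finset.mul_sum,
    mul_comm]

section Clifford

variable {d N : ℕ} {γ : Fin d → Matrix (Fin N) (Fin N) ℂ}

theorem gdotF_mul_add_mul_swap
    (hγ : ∀ j k, γ j * γ k + γ k * γ j = if j = k then (2 : ℂ) • 1 else 0)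
    (a b : ESp d) :
    gdotF γ (fun j => a j) * gdotF γ (fun j => b j)
        + gdotF γ (fun j => b j) * gdotF γ (fun j => a j)
      = (2 * (inner ℝ a b : ℂ)) • 1 := by
  rw [gdotF, gdotF, sum_smul_mul_add_sum_smul_mul_of_anticomm hγ]
  simp [PiLp.inner_apply, mul_comm]

theorem gdotF_mul_self_of_norm_eq_one
    (hγ : ∀ j k, γ j * γ k + γ k * γ j = if j = k then (2 : ℂ) • 1 else 0)
    {w : ESp d} (hw : ‖w‖ = 1) :
    gdotF γ (fun j => w j) * gdotF γ (fun j => w j) = 1 := by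
  have h := gdotF_mul_add_mul_swap hγ w w
  rw [real_inner_self_eq_norm_sq, hw, ← two_smul ℂ] at h
  simpa using h

theorem gdotF_mul_eq_neg_mul_of_inner_eq_zero
    (hγ : ∀ j k, γ j * γ k + γ k * γ j = if j = k then (2 : ℂ) • 1 else 0)
    {w y : ESp d} (hwy : inner ℝ w y = 0) :
    gdotF γ (fun j => w j) * gdotF γ (fun j => y j)
      = -(gdotF γ (fun j => y j) * gdotF γ (fun j => w j)) := by
  have h := gdotF_mul_add_mul_swap hγ w y
  rw [hwy] at h
  simpa [add_eq_zero_iff_eq_neg] using h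

@[simp] theorem gdotF_zero : gdotF γ 0 = 0 := by
  simp [gdotF]

end Clifford

section mulVecE

variable {N : ℕ}

@[simp] theorem mulVecE_mul (A B : Matrix (Fin N) (Fin N) ℂ) (v : Spinor N) :
    mulVecE (A * B) v = mulVecE A (mulVecE B v) := by
  simp [mulVecE]

@[simp] theorem mulVecE_one (v : Spinor N) : mulVecE 1 v = v := by
  simp [mulVecE]

@[simp] theorem mulVecE_zero (v : Spinor N) : mulVecE 0 v = 0 := by
  simp [mulVecE]

@[simp] theorem mulVecE_neg (A : Matrix (Fin N) (Fin N) ℂ) (v : Spinor N) :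
    mulVecE (-A) v = -mulVecE A v := by
  simp [mulVecE]

@[simp] theorem mulVecE_smul (A : Matrix (Fin N) (Fin N) ℂ) (c : ℂ) (v : Spinor N) :
    mulVecE A (c • v) = c • mulVecE A v :=
  map_smul (Matrix.toEuclideanLin A) c v

end mulVecE

theorem equality_case_spinor_relations_general
    (d : ℕ) (N : ℕ)
    (γ : Fin d → Matrix (Fin N) (Fin N) ℂ)
    (hanti : ∀ j k, γ j * γ k + γ k * γ j = if j = k then (2 : ℂ) • 1 else 0)
    (w : ESp d) (hw : ‖w‖ = 1)
    (M : Matrix (Fin d) (Fin d) ℝ) (hMw : M.mulVec (fun j => w j) = 0)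
    (φ₀ φ₁ : Spinor N)
    (hmain : ∀ x : ESp d,
      Complex.I • mulVecE (gdotF γ (fun j => x j)) φ₀
        = mulVecE (gdotF γ (fun j => w j) * gdotF γ (fun j => x j)) φ₁
          + (2 : ℂ) • mulVecE (gdotF γ (M.mulVec (fun j => x j))) φ₀) :
    ((-Complex.I) • φ₁ = mulVecE (gdotF γ (fun j => w j)) φ₀)
      ∧ ∀ y : ESp d, (inner ℝ w y : ℝ) = 0 →
          mulVecE (gdotF γ (M.mulVec (fun j => y j))) φ₀
            = Complex.I • mulVecE (gdotF γ (fun j => y j)) φ₀ := by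
  have hw2 := gdotF_mul_self_of_norm_eq_one hanti hw
  have hφ₁ : φ₁ = Complex.I • mulVecE (gdotF γ (fun j => w j)) φ₀ := by
    have h := hmain w
    rw [hMw, gdotF_zero, mulVecE_zero, smul_zero, add_zero, hw2, mulVecE_one] at h
    exact h.symm
  refine ⟨by simp [hφ₁, smul_smul], fun y hy => ?_⟩
  have h := hmain y
  rw [hφ₁, mulVecE_smul, gdotF_mul_eq_neg_mul_of_inner_eq_zero hanti hy, ← mulVecE_mul, neg_mul,
    mul_assoc, hw2, mul_one, mulVecE_neg, smul_neg, eq_neg_add_iff_add_eq, ← two_smul ℂ] at h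
  exact (smul_right_injective _ two_ne_zero h).symm

/-- From the identity `i(γ·x)φ₀ = (γ·w)(γ·x)φ₁ + 2(γ·(Mx))φ₀`
(for all `x`), with `|w| = 1` and `Mw = 0`, one deduces `-iφ₁ = (γ·w)φ₀` and
`(γ·(My))φ₀ = i(γ·y)φ₀` for all `y ⊥ w`. -/
theorem equality_case_spinor_relations
    (d : ℕ) (hd : 3 ≤ d) (N : ℕ) (hN : N = 2 ^ (d / 2))
    (γ : Fin d → Matrix (Fin N) (Fin N) ℂ)
    (hherm : ∀ j, (γ j).IsHermitian)
    (hanti : ∀ j k, γ j * γ k + γ k * γ j = if j = k then (2 : ℂ) • 1 else 0)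
    (w : ESp d) (hw : ‖w‖ = 1)
    (M : Matrix (Fin d) (Fin d) ℝ) (hMw : M.mulVec (fun j => w j) = 0)
    (φ₀ φ₁ : Spinor N)
    (hmain : ∀ x : ESp d,
      Complex.I • mulVecE (gdotF γ (fun j => x j)) φ₀
        = mulVecE (gdotF γ (fun j => w j) * gdotF γ (fun j => x j)) φ₁
          + (2 : ℂ) • mulVecE (gdotF γ (M.mulVec (fun j => x j))) φ₀) :
    ((-Complex.I) • φ₁ = mulVecE (gdotF γ (fun j => w j)) φ₀)
      ∧ ∀ y : ESp d, (inner ℝ w y : ℝ) = 0 →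
          mulVecE (gdotF γ (M.mulVec (fun j => y j))) φ₀
            = Complex.I • mulVecE (gdotF γ (fun j => y j)) φ₀ :=
  equality_case_spinor_relations_general d N γ hanti w hw M hMw φ₀ φ₁ hmain
end
end
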